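/- Let G = (V,E) be a finite graph with a vertex- and edge-transitive automorphism group preserving scale 𝒮 = {B(i,S)}. Then the maximum of ∑_i η_i over feasible (η, κ) of the weighted isoperimetric problem equals (|V|/|E|)·γ(G,𝒮), where γ(G,𝒮) = min{|∂T|/|T| : ∅ ≠ T ⊆ S ∈ 𝒮} is the Cheeger constant at scale 𝒮. -/

import Mathlib

/-!
Lower bound: the uniform pair `κ_e = 1/|E|`, `η_i = γ/|E|` is feasible, because every `T` inside
a ball has `|T| γ ≤ |∂T|`.

Upper bound: fix a minimiser `T ⊆ B(i,S)` of `|∂T|/|T|` and a feasible `(η, κ)`. Every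
automorphism `g` maps `T` into `B(g i, S)` and `∂T` onto `∂(g T)`, so the constraint for `g T`
reads `∑_{t ∈ T} η (g t) ≤ ∑_{e ∈ ∂T} κ (g e)`. Averaging over the automorphism group, which is
transitive on vertices and on edges, turns `∑_g η (g t)` into `|Aut|/|V| · ∑ η` and
`∑_g κ (g e)` into `|Aut|/|E| · ∑ κ ≤ |Aut|/|E|`, whence `|T| ∑ η ≤ |V|/|E| · |∂T|`.
-/

open Finset
open scoped Pointwise

section Averaging

variable {Γ α : Type*} [Group Γ] [MulAction Γ α]

theorem Finset.sum_smul_finset [DecidableEq α] {M : Type*} [AddCommMonoid M] (g : Γ)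
    (s : Finset α) (f : α → M) : ∑ x ∈ g • s, f x = ∑ x ∈ s, f (g • x) :=
  sum_image fun _ _ _ _ h => MulAction.injective g h

variable [Fintype Γ]

theorem Finset.card_nsmul_sum_comp_smul {M : Type*} [AddCommMonoid M] {s : Finset α}
    (hs : ∀ g : Γ, ∀ x ∈ s, g • x ∈ s) (htrans : ∀ x ∈ s, ∀ y ∈ s, ∃ g : Γ, g • x = y)
    (f : α → M) {x : α} (hx : x ∈ s) :
    #s • ∑ g : Γ, f (g • x) = Fintype.card Γ • ∑ y ∈ s, f y := by
  have horbit : ∀ y ∈ s, ∑ g : Γ, f (g • y) = ∑ g : Γ, f (g • x) := by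
    intro y hy
    obtain ⟨h, rfl⟩ := htrans x hx y hy
    simpa only [Equiv.coe_mulRight, mul_smul] using
      Equiv.sum_comp (Equiv.mulRight h) (fun g => f (g • x))
  have hperm : ∀ g : Γ, ∑ y ∈ s, f (g • y) = ∑ y ∈ s, f y := fun g =>
    sum_nbij' (g • ·) (g⁻¹ • ·) (fun y hy => hs g y hy) (fun y hy => hs g⁻¹ y hy)
      (fun y _ => inv_smul_smul g y) (fun y _ => smul_inv_smul g y) fun _ _ => rfl
  calc #s • ∑ g : Γ, f (g • x) = ∑ y ∈ s, ∑ g : Γ, f (g • y) := by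
        rw [sum_congr rfl horbit, sum_const]
    _ = ∑ g : Γ, ∑ y ∈ s, f (g • y) := sum_comm
    _ = Fintype.card Γ • ∑ y ∈ s, f y := by
        rw [sum_congr rfl fun g _ => hperm g, sum_const, card_univ]

theorem Finset.sum_comp_smul_eq_div_mul {K : Type*} [Semifield K] [CharZero K] {s : Finset α}
    (hs : ∀ g : Γ, ∀ x ∈ s, g • x ∈ s) (htrans : ∀ x ∈ s, ∀ y ∈ s, ∃ g : Γ, g • x = y)
    (f : α → K) {x : α} (hx : x ∈ s) :
    ∑ g : Γ, f (g • x) = Fintype.card Γ / #s * ∑ y ∈ s, f y := by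
  have hcard : (#s : K) ≠ 0 := Nat.cast_ne_zero.mpr (card_ne_zero_of_mem hx)
  have := card_nsmul_sum_comp_smul hs htrans f hx
  rw [nsmul_eq_mul, nsmul_eq_mul] at this
  rw [div_mul_eq_mul_div, eq_div_iff hcard, mul_comm, this]

theorem card_mul_sum_le_of_forall_smul {V K : Type*} [Fintype V] [MulAction Γ V]
    [MulAction.IsPretransitive Γ V] [Field K] [LinearOrder K] [IsStrictOrderedRing K]
    {E : Finset α} (hE : ∀ g : Γ, ∀ e ∈ E, g • e ∈ E)
    (htrans : ∀ e ∈ E, ∀ e' ∈ E, ∃ g : Γ, g • e = e') (η : V → K) (κ : α → K)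
    {T : Finset V} {B : Finset α} (hB : B ⊆ E)
    (h : ∀ g : Γ, ∑ t ∈ T, η (g • t) ≤ ∑ b ∈ B, κ (g • b)) :
    #T * ∑ v, η v ≤ Fintype.card V / #E * (#B * ∑ e ∈ E, κ e) := by
  have hvertex (t : V) : (Fintype.card V : K) * ∑ g : Γ, η (g • t) =
      Fintype.card Γ * ∑ v, η v := by
    simpa only [nsmul_eq_mul, card_univ] using
      card_nsmul_sum_comp_smul (s := univ) (fun _ _ _ => mem_univ _)
        (fun x _ y _ => MulAction.exists_smul_eq Γ x y) η (mem_univ t)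
  have hedge (b : α) (hb : b ∈ B) : ∑ g : Γ, κ (g • b) = Fintype.card Γ / #E * ∑ e ∈ E, κ e :=
    sum_comp_smul_eq_div_mul hE htrans κ (hB hb)
  have hΓ : (0 : K) < Fintype.card Γ := by exact_mod_cast Fintype.card_pos
  refine le_of_mul_le_mul_left ?_ hΓ
  calc (Fintype.card Γ : K) * (#T * ∑ v, η v)
      = Fintype.card V * ∑ g : Γ, ∑ t ∈ T, η (g • t) := by
        rw [sum_comm, mul_sum (s := T), sum_congr rfl fun t _ => hvertex t, sum_const,
          nsmul_eq_mul]
        ring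
    _ ≤ Fintype.card V * ∑ g : Γ, ∑ b ∈ B, κ (g • b) := by gcongr with g; exact h g
    _ = Fintype.card Γ * (Fintype.card V / #E * (#B * ∑ e ∈ E, κ e)) := by
        rw [sum_comm, sum_congr rfl hedge, sum_const, nsmul_eq_mul]
        ring

end Averaging

instance Sym2.instMulAction {M β : Type*} [Monoid M] [MulAction M β] :
    MulAction M (Sym2 β) where
  smul g := Sym2.map (g • ·)
  one_smul e := by
    change Sym2.map (1 • ·) e = e
    simp only [one_smul, Sym2.map_id', id_eq]
  mul_smul g h e := by
    change Sym2.map _ e = Sym2.map _ (Sym2.map _ e)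
    simp only [Sym2.map_map, Function.comp_def, mul_smul]

@[simp]
theorem Sym2.smul_mk {M β : Type*} [Monoid M] [MulAction M β] (g : M) (a b : β) :
    g • s(a, b) = s(g • a, g • b) :=
  rfl

namespace SimpleGraph

variable {V W : Type*} {G : SimpleGraph V} {H : SimpleGraph W}

theorem Hom.edist_le (f : G →g H) (u v : V) : H.edist (f u) (f v) ≤ G.edist u v := by
  by_cases huv : G.Reachable u v
  · obtain ⟨p, hp⟩ := huv.exists_walk_length_eq_edist
    calc H.edist (f u) (f v) ≤ (p.map f).length := SimpleGraph.edist_le _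
      _ = G.edist u v := by rw [Walk.length_map, hp]
  · rw [edist_eq_top_of_not_reachable huv]
    exact le_top

theorem Iso.edist_eq (φ : G ≃g H) (u v : V) : H.edist (φ u) (φ v) = G.edist u v :=
  le_antisymm (Hom.edist_le φ.toHom u v) <| by
    simpa using Hom.edist_le φ.symm.toHom (φ u) (φ v)

theorem Iso.dist_eq (φ : G ≃g H) (u v : V) : H.dist (φ u) (φ v) = G.dist u v := by
  rw [dist, dist, φ.edist_eq]

variable [Fintype V] [DecidableRel G.Adj]

theorem Iso.smul_mem_edgeFinset_iff (g : G ≃g G) {e : Sym2 V} :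
    g • e ∈ G.edgeFinset ↔ e ∈ G.edgeFinset := by
  induction e with
  | h a b => simp only [Sym2.smul_mk, mem_edgeFinset, mem_edgeSet, RelIso.smul_def,
      Iso.map_adj_iff]

variable (G) [DecidableEq V]

noncomputable def closedBallFinset (i : V) (S : ℕ) : Finset V :=
  univ.filter fun u => G.Reachable i u ∧ G.dist i u ≤ S

noncomputable def edgeBoundary (T : Finset V) : Finset (Sym2 V) :=
  G.edgeFinset.filter fun e => ∃ a b, e = s(a, b) ∧ a ∈ T ∧ b ∉ T

variable {G}

theorem mem_edgeBoundary {T : Finset V} {e : Sym2 V} :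
    e ∈ G.edgeBoundary T ↔ e ∈ G.edgeFinset ∧ ∃ a b, e = s(a, b) ∧ a ∈ T ∧ b ∉ T := by
  rw [edgeBoundary, mem_filter]

variable (g : G ≃g G)

theorem smul_finset_subset_closedBallFinset {T : Finset V} {i : V} {S : ℕ}
    (hT : T ⊆ G.closedBallFinset i S) : g • T ⊆ G.closedBallFinset (g • i) S := by
  intro x hx
  obtain ⟨t, ht, rfl⟩ := mem_smul_finset.mp hx
  simpa only [closedBallFinset, mem_filter, mem_univ, true_and, RelIso.smul_def,
    Iso.reachable_iff, Iso.dist_eq] using hT ht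

theorem smul_mem_edgeBoundary {T : Finset V} {e : Sym2 V} (he : e ∈ G.edgeBoundary T) :
    g • e ∈ G.edgeBoundary (g • T) := by
  obtain ⟨he, a, b, rfl, ha, hb⟩ := mem_edgeBoundary.mp he
  exact mem_edgeBoundary.mpr ⟨(g.smul_mem_edgeFinset_iff).mpr he, g • a, g • b, rfl,
    smul_mem_smul_finset ha, (smul_mem_smul_finset_iff g).not.mpr hb⟩

theorem edgeBoundary_smul (T : Finset V) : G.edgeBoundary (g • T) = g • G.edgeBoundary T := by
  refine Subset.antisymm (fun e he => ?_) (smul_finset_subset_iff.mpr fun e he => ?_)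
  · rw [← inv_smul_mem_iff]
    simpa only [inv_smul_smul] using smul_mem_edgeBoundary g⁻¹ he
  · rw [mem_inv_smul_finset_iff]
    exact smul_mem_edgeBoundary g he

variable {S : ℕ} {η : V → ℝ} {κ : Sym2 V → ℝ}

theorem card_mul_sum_le_of_feasible (hv : ∀ i j : V, ∃ g : G ≃g G, g i = j)
    (he : ∀ e ∈ G.edgeFinset, ∀ e' ∈ G.edgeFinset, ∃ g : G ≃g G, g • e = e')
    (hκ : ∑ e ∈ G.edgeFinset, κ e ≤ 1)
    (hfeas : ∀ i, ∀ T ⊆ G.closedBallFinset i S, ∑ j ∈ T, η j ≤ ∑ e ∈ G.edgeBoundary T, κ e)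
    {i : V} {T : Finset V} (hT : T ⊆ G.closedBallFinset i S) :
    #T * ∑ v, η v ≤ Fintype.card V / #G.edgeFinset * #(G.edgeBoundary T) := by
  let : Fintype (G ≃g G) := Fintype.ofInjective _ RelIso.toEquiv_injective
  have : MulAction.IsPretransitive (G ≃g G) V := ⟨hv⟩
  have hgT (g : G ≃g G) : ∑ t ∈ T, η (g • t) ≤ ∑ e ∈ G.edgeBoundary T, κ (g • e) := by
    simpa only [sum_smul_finset, edgeBoundary_smul] using
      hfeas (g • i) (g • T) (smul_finset_subset_closedBallFinset g hT)
  calc (#T : ℝ) * ∑ v, η v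
      ≤ Fintype.card V / #G.edgeFinset * (#(G.edgeBoundary T) * ∑ e ∈ G.edgeFinset, κ e) :=
        card_mul_sum_le_of_forall_smul (fun g _ => g.smul_mem_edgeFinset_iff.mpr) he η κ
          (filter_subset _ _) hgT
    _ ≤ Fintype.card V / #G.edgeFinset * (#(G.edgeBoundary T) * 1) := by gcongr
    _ = Fintype.card V / #G.edgeFinset * #(G.edgeBoundary T) := by rw [mul_one]

theorem card_mul_le_card_edgeBoundary {γ : ℝ}
    (hγ : γ ∈ lowerBounds {x : ℝ | ∃ (i : V) (T : Finset V), T.Nonempty ∧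
      T ⊆ G.closedBallFinset i S ∧ x = #(G.edgeBoundary T) / #T})
    {i : V} {T : Finset V} (hT : T ⊆ G.closedBallFinset i S) :
    #T * γ ≤ #(G.edgeBoundary T) := by
  rcases T.eq_empty_or_nonempty with rfl | hTne
  · simp
  · rw [mul_comm, ← le_div_iff₀ (by exact_mod_cast hTne.card_pos)]
    exact hγ ⟨i, T, hTne, hT, rfl⟩

end SimpleGraph

/-- For a vertex- and edge-transitive finite graph with scale given by balls of
radius `S`, the maximum of `∑ η_i` over feasible `(η, κ)` of the weighted
isoperimetric problem equals `(|V|/|E|)·γ(G,𝒮)`, where `γ(G,𝒮)` is the Cheeger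
constant at scale `𝒮`. -/
theorem stmt17 {V : Type*} [Fintype V] [DecidableEq V]
    (G : SimpleGraph V) [DecidableRel G.Adj] (S : ℕ)
    (hv : ∀ i j : V, ∃ f : G ≃g G, f i = j)
    (he : ∀ e₁ ∈ G.edgeFinset, ∀ e₂ ∈ G.edgeFinset,
      ∃ f : G ≃g G, Sym2.map f e₁ = e₂)
    (ball : V → Finset V)
    (hball : ∀ i, ball i = Finset.univ.filter fun u => G.Reachable i u ∧ G.dist i u ≤ S)
    (bd : Finset V → Finset (Sym2 V))
    (hbd : ∀ T, bd T = G.edgeFinset.filter fun e => ∃ a b, e = s(a, b) ∧ a ∈ T ∧ b ∉ T)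
    (γ : ℝ)
    (hγ : IsLeast {x : ℝ | ∃ (i : V) (T : Finset V), T.Nonempty ∧ T ⊆ ball i ∧
      x = ((bd T).card : ℝ) / (T.card : ℝ)} γ) :
    IsGreatest {x : ℝ | ∃ (η : V → ℝ) (κ : Sym2 V → ℝ),
        (∀ e, 0 ≤ κ e) ∧ (∑ e ∈ G.edgeFinset, κ e ≤ 1) ∧
        (∀ i : V, ∀ T ⊆ ball i, ∑ j ∈ T, η j ≤ ∑ e ∈ bd T, κ e) ∧
        x = ∑ i, η i}
      ((Fintype.card V : ℝ) / (G.edgeFinset.card : ℝ) * γ) := by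
  obtain rfl : ball = (G.closedBallFinset · S) := funext hball
  obtain rfl : bd = G.edgeBoundary := funext hbd
  refine ⟨⟨fun _ => γ / #G.edgeFinset, fun _ => 1 / #G.edgeFinset, fun _ => by positivity,
    ?_, fun i T hT => ?_, ?_⟩, ?_⟩
  · rw [sum_const, nsmul_eq_mul, mul_one_div]
    exact div_self_le_one _
  · simp only [sum_const, nsmul_eq_mul, mul_div_assoc', mul_one]
    exact div_le_div_of_nonneg_right (G.card_mul_le_card_edgeBoundary hγ.2 hT)
      (Nat.cast_nonneg _)
  · rw [sum_const, card_univ, nsmul_eq_mul]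
    ring
  · rintro x ⟨η, κ, -, hκ, hfeas, rfl⟩
    obtain ⟨i, T, hTne, hT, rfl⟩ := hγ.1
    rw [mul_div_assoc', le_div_iff₀ (by exact_mod_cast hTne.card_pos), mul_comm]
    exact G.card_mul_sum_le_of_feasible hv he hκ hfeas hT
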